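/- Let n ≥ 2, g ≥ 1 and let d, r be integers with r ≥ 1. If d^2 - (n-2)·d·r + (n-1)·(g-1)·r^2 < 0 then g - 1 < d/r < n - g; in particular d/r < n - 1. -/

import Mathlib

/-!
Dividing by `r²`, the slope `μ = d / r` satisfies `Q(μ) < 0` for the monic quadratic
`Q(x) = x² - (n - 2) x + (n - 1)(g - 1)`. Negativity somewhere forces a positive discriminant,
which puts `g - 1` strictly left of the vertex `(n - 2) / 2`. Since `Q(g - 1) = g (g - 1) ≥ 0`,
the point `g - 1` and its mirror image `n - 1 - g` lie outside the interval where `Q < 0`,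
so `g - 1 < μ < n - 1 - g < n - g ≤ n - 1`.
-/

section Quadratic

variable {R : Type*} [CommRing R] [LinearOrder R] [IsStrictOrderedRing R] {s p a x : R}

theorem two_mul_lt_of_sq_sub_mul_add_succ_mul_neg (hs : 0 ≤ s)
    (hx : x ^ 2 - s * x + (s + 1) * a < 0) : 2 * a < s := by
  by_contra! hsa
  nlinarith [sq_nonneg (2 * x - s), mul_nonneg hs (sub_nonneg.2 hsa)]

theorem lt_and_lt_sub_of_sq_sub_mul_add_neg (ha : 2 * a ≤ s)
    (hQa : 0 ≤ a ^ 2 - s * a + p) (hQx : x ^ 2 - s * x + p < 0) : a < x ∧ x < s - a := by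
  have hprod : (x - a) * (x - (s - a)) < 0 := by linear_combination hQx + hQa
  rcases mul_neg_iff.1 hprod with ⟨hxa, hxs⟩ | ⟨hxa, hxs⟩
  · exact ⟨sub_pos.1 hxa, sub_neg.1 hxs⟩
  · exact absurd ha (by linarith)

theorem div_sq_sub_mul_div_add_neg {K : Type*} [Field K] [LinearOrder K] [IsStrictOrderedRing K]
    {s p d r : K} (hr : 0 < r) (h : d ^ 2 - s * d * r + p * r ^ 2 < 0) :
    (d / r) ^ 2 - s * (d / r) + p < 0 := by
  have hform : (d / r) ^ 2 - s * (d / r) + p = (d ^ 2 - s * d * r + p * r ^ 2) / r ^ 2 := by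
    field_simp
  rw [hform]
  exact div_neg_of_neg_of_pos h (by positivity)

end Quadratic

theorem bogomolov_unstable_slope_range (n g d r : ℤ) (hn : 2 ≤ n) (hg : 1 ≤ g)
    (hr : 1 ≤ r)
    (h : (d : ℝ) ^ 2 - ((n : ℝ) - 2) * d * r + ((n : ℝ) - 1) * ((g : ℝ) - 1) * r ^ 2 < 0) :
    ((g : ℝ) - 1 < (d : ℝ) / r ∧ (d : ℝ) / r < (n : ℝ) - g) ∧
      (d : ℝ) / r < (n : ℝ) - 1 := by
  have hr' : (0 : ℝ) < r := by exact_mod_cast hr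
  have hg' : (1 : ℝ) ≤ g := by exact_mod_cast hg
  have hn' : (2 : ℝ) ≤ n := by exact_mod_cast hn
  have hQμ := div_sq_sub_mul_div_add_neg (d := d) (s := (n : ℝ) - 2)
    (p := ((n : ℝ) - 2 + 1) * ((g : ℝ) - 1)) hr' (by linear_combination h)
  have hvertex := two_mul_lt_of_sq_sub_mul_add_succ_mul_neg (by linarith) hQμ
  have hQg : 0 ≤ ((g : ℝ) - 1) ^ 2 - ((n : ℝ) - 2) * ((g : ℝ) - 1)
      + ((n : ℝ) - 2 + 1) * ((g : ℝ) - 1) := by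
    linear_combination mul_nonneg (by linarith : (0 : ℝ) ≤ g) (sub_nonneg.2 hg')
  obtain ⟨hlow, hhigh⟩ := lt_and_lt_sub_of_sq_sub_mul_add_neg hvertex.le hQg hQμ
  exact ⟨⟨hlow, by linarith⟩, by linarith⟩
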